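/- Let σ and τ be protagonist strategies in an initialized generalised safety/reachability game with initial vertex v₀. Suppose that for every maximal history h compatible with both σ and τ (i.e., h is compatible with both and no proper extension of h is compatible with both) there is a prefix h' of h with aVal(h', σ) = aVal(h', τ) and cVal(h', σ) = cVal(h', τ). Then aVal(v₀, σ) = aVal(v₀, τ) and cVal(v₀, σ) = cVal(v₀, τ). -/

import Mathlib

open scoped Classical

/-- A generalised safety/reachability game: a finite directed graph where every vertex has a
successor, a set `protag` of protagonist vertices (the rest belong to the antagonist), a set
`leaf` of leaves (each equipped with exactly a self-loop), an integer payoff attached to each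
leaf, and an initial vertex `v0`. -/
structure GSRGame where
  V : Type
  fin : Finite V
  E : V → V → Prop
  succ_exists : ∀ v : V, ∃ w : V, E v w
  protag : V → Prop
  leaf : V → Prop
  leaf_loop : ∀ v w : V, leaf v → (E v w ↔ w = v)
  pay : V → ℤ
  v0 : V

namespace GSRGame

variable (g : GSRGame)

/-- A strategy: to each nonempty history it assigns a successor of the last vertex.
(A protagonist strategy is only ever consulted at histories ending in a protagonist vertex,
an antagonist strategy at histories ending in an antagonist vertex.) -/
structure Strat where
  act : List g.V → g.V
  valid : ∀ (h : List g.V) (hne : h ≠ []), g.E (h.getLast hne) (act h)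

/-- One step of the play extending history `h`: the protagonist moves according to `σ` at
protagonist vertices, the antagonist according to `τ` elsewhere. -/
noncomputable def step (σ τ : g.Strat) (h : List g.V) : List g.V :=
  h ++ [if g.protag (h.getLastD g.v0) then σ.act h else τ.act h]

/-- The history obtained after `k` steps of play by `(σ, τ)` extending `h`. -/
noncomputable def playList (σ τ : g.Strat) (h : List g.V) : ℕ → List g.V
  | 0 => h
  | k + 1 => g.step σ τ (playList σ τ h k)

/-- The outcome (infinite path) induced by `(σ, τ)` from the history `h`. -/
noncomputable def play (σ τ : g.Strat) (h : List g.V) (k : ℕ) : g.V :=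
  (g.playList σ τ h k).getLastD g.v0

/-- The payoff of an outcome: the payoff of the leaf it reaches, and `0` if it reaches
no leaf. -/
noncomputable def payoffOf (ρ : ℕ → g.V) : ℤ :=
  if hx : ∃ k : ℕ, g.leaf (ρ k) then g.pay (ρ (Nat.find hx)) else 0

/-- The payoff `p(h, σ, τ)` of the outcome induced by `(σ, τ)` from the history `h`. -/
noncomputable def pval (σ τ : g.Strat) (h : List g.V) : ℤ :=
  g.payoffOf (g.play σ τ h)

/-- `h` is a history (a nonempty path starting at `v0`) compatible with the protagonist
strategy `σ`: every protagonist move along `h` agrees with `σ`. -/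
def Compat (σ : g.Strat) (h : List g.V) : Prop :=
  h ≠ [] ∧ h.head? = some g.v0 ∧ List.Chain' g.E h ∧
    ∀ (p : List g.V) (v : g.V), (p ++ [v]) <+: h → p ≠ [] →
      g.protag (p.getLastD g.v0) → σ.act p = v

/-- The cooperative value `cVal(h, σ)`. -/
noncomputable def cVal (σ : g.Strat) (h : List g.V) : ℤ :=
  sSup {z : ℤ | ∃ τ : g.Strat, z = g.pval σ τ h}

/-- The antagonistic value `aVal(h, σ)`. -/
noncomputable def aVal (σ : g.Strat) (h : List g.V) : ℤ :=
  sInf {z : ℤ | ∃ τ : g.Strat, z = g.pval σ τ h}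

/-- The antagonistic value `aVal(h)` of a history. -/
noncomputable def aValH (h : List g.V) : ℤ :=
  sSup {z : ℤ | ∃ σ : g.Strat, z = g.aVal σ h}

/-- The antagonistic-cooperative value `acVal(h)` of a history. -/
noncomputable def acVal (h : List g.V) : ℤ :=
  sSup {z : ℤ | ∃ σ : g.Strat, g.aValH h ≤ g.aVal σ h ∧ z = g.cVal σ h}

/-- Weak dominance `σ ⪯ σ'` (from the initial vertex `v0`). -/
def Dom (σ σ' : g.Strat) : Prop :=
  ∀ τ : g.Strat, g.pval σ τ [g.v0] ≤ g.pval σ' τ [g.v0]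

/-- Dominance `σ ≺ σ'`. -/
def SDom (σ σ' : g.Strat) : Prop :=
  g.Dom σ σ' ∧ ∃ τ : g.Strat, g.pval σ τ [g.v0] < g.pval σ' τ [g.v0]

/-- Admissibility: `σ` is dominated by no strategy. -/
def Admissible (σ : g.Strat) : Prop := ¬ ∃ σ' : g.Strat, g.SDom σ σ'

/-- `h` is a witness of non-dominance of `σ₁` by `σ₂`. -/
def NonDomWitness (σ₁ σ₂ : g.Strat) (h : List g.V) : Prop :=
  g.Compat σ₁ h ∧ g.Compat σ₂ h ∧ g.protag (h.getLastD g.v0) ∧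
    σ₁.act h ≠ σ₂.act h ∧ g.aVal σ₂ h < g.cVal σ₁ h

/-- `h` is a witness of non-admissibility of `σ`. -/
def NonAdmWitness (σ : g.Strat) (h : List g.V) : Prop :=
  g.Compat σ h ∧
    g.aVal σ h ≤ g.cVal σ h ∧ g.cVal σ h ≤ g.aValH h ∧ g.aValH h ≤ g.acVal h ∧
    (g.aVal σ h < g.cVal σ h ∨ g.cVal σ h < g.aValH h ∨ g.aValH h < g.acVal h)

end GSRGame

/-!
Fix an antagonist strategy `τ'` and compare the plays of `σ` and `τ` against it.
If they never separate, both have the same payoff. Otherwise they separate at a protagonist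
vertex, ending a maximal history compatible with both, and the hypothesis yields a prefix `p`
of it on which the values of `σ` and `τ` agree. The antagonist can steer the play along any
history compatible with `σ`, so `aVal(v₀, σ) ≤ aVal(p, σ)` and `cVal(p, σ) ≤ cVal(v₀, σ)`,
while the payoff of `(τ, τ')` lies between `aVal(p, τ)` and `cVal(p, τ)`. This gives
`aVal(v₀, σ) ≤ aVal(v₀, τ)` and `cVal(v₀, σ) ≤ cVal(v₀, τ)`; the hypothesis is symmetric.
-/

theorem List.getLastD_eq_getLast {α : Type*} {l : List α} (hne : l ≠ []) (d : α) :
    l.getLastD d = l.getLast hne := by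
  rw [List.getLastD_eq_getLast?, List.getLast?_eq_some_getLast hne, Option.getD_some]

theorem List.IsPrefix.head?_eq {α : Type*} {l₁ l₂ : List α} (h : l₁ <+: l₂) (hne : l₁ ≠ []) :
    l₂.head? = l₁.head? := by
  obtain ⟨t, rfl⟩ := h
  exact List.head?_append_of_ne_nil _ hne

namespace GSRGame

variable {g : GSRGame}

section Values

instance : Nonempty g.Strat := by
  choose next hnext using g.succ_exists
  exact ⟨⟨fun h => next (h.getLastD g.v0),
    fun h hne => List.getLastD_eq_getLast hne g.v0 ▸ hnext _⟩⟩

theorem pval_mem_insert_range_pay (σ τ : g.Strat) (h : List g.V) :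
    g.pval σ τ h ∈ insert 0 (Set.range g.pay) := by
  unfold pval payoffOf
  split
  · exact Set.mem_insert_of_mem _ ⟨_, rfl⟩
  · exact Set.mem_insert _ _

theorem finite_pval_set (σ : g.Strat) (h : List g.V) :
    {z : ℤ | ∃ τ : g.Strat, z = g.pval σ τ h}.Finite := by
  have := g.fin
  refine ((Set.finite_range g.pay).insert 0).subset ?_
  rintro z ⟨τ, rfl⟩
  exact pval_mem_insert_range_pay σ τ h

theorem nonempty_pval_set (σ : g.Strat) (h : List g.V) :
    {z : ℤ | ∃ τ : g.Strat, z = g.pval σ τ h}.Nonempty :=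
  ⟨_, Classical.arbitrary g.Strat, rfl⟩

theorem aVal_le_pval (σ τ : g.Strat) (h : List g.V) : g.aVal σ h ≤ g.pval σ τ h :=
  csInf_le (finite_pval_set σ h).bddBelow ⟨τ, rfl⟩

theorem pval_le_cVal (σ τ : g.Strat) (h : List g.V) : g.pval σ τ h ≤ g.cVal σ h :=
  le_csSup (finite_pval_set σ h).bddAbove ⟨τ, rfl⟩

theorem le_aVal {σ : g.Strat} {h : List g.V} {z : ℤ} (hz : ∀ τ, z ≤ g.pval σ τ h) :
    z ≤ g.aVal σ h :=
  le_csInf (nonempty_pval_set σ h) (by rintro _ ⟨τ, rfl⟩; exact hz τ)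

theorem exists_pval_eq_aVal (σ : g.Strat) (h : List g.V) :
    ∃ τ, g.pval σ τ h = g.aVal σ h := by
  obtain ⟨τ, hτ⟩ := (nonempty_pval_set σ h).csInf_mem (finite_pval_set σ h)
  exact ⟨τ, hτ.symm⟩

theorem exists_pval_eq_cVal (σ : g.Strat) (h : List g.V) :
    ∃ τ, g.pval σ τ h = g.cVal σ h := by
  obtain ⟨τ, hτ⟩ := (nonempty_pval_set σ h).csSup_mem (finite_pval_set σ h)
  exact ⟨τ, hτ.symm⟩

end Values

section Plays

variable (σ τ : g.Strat)

theorem playList_succ (h : List g.V) (k : ℕ) :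
    g.playList σ τ h (k + 1) = g.step σ τ (g.playList σ τ h k) := rfl

theorem playList_add (h : List g.V) (j k : ℕ) :
    g.playList σ τ (g.playList σ τ h j) k = g.playList σ τ h (j + k) := by
  induction k with
  | zero => rfl
  | succ k ih => rw [playList_succ, ih]; rfl

theorem length_playList (h : List g.V) (k : ℕ) :
    (g.playList σ τ h k).length = h.length + k := by
  induction k with
  | zero => rfl
  | succ k ih => simp [playList_succ, step, ih, Nat.add_assoc]

theorem playList_ne_nil {h : List g.V} (hne : h ≠ []) (k : ℕ) : g.playList σ τ h k ≠ [] := by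
  rw [← List.length_pos_iff, length_playList]
  have := List.length_pos_iff.mpr hne
  omega

theorem playList_prefix_playList (h : List g.V) {j k : ℕ} (hjk : j ≤ k) :
    g.playList σ τ h j <+: g.playList σ τ h k := by
  induction k, hjk using Nat.le_induction with
  | base => exact List.prefix_rfl
  | succ k _ ih => exact ih.trans (List.prefix_append _ _)

theorem eq_playList_of_prefix {p : List g.V} {k : ℕ} (hp : p <+: g.playList σ τ [g.v0] k)
    (hne : p ≠ []) : p = g.playList σ τ [g.v0] (p.length - 1) := by
  have hpos := List.length_pos_iff.mpr hne
  have hlen : (g.playList σ τ [g.v0] (p.length - 1)).length = p.length := by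
    rw [length_playList, List.length_singleton]
    omega
  have hle : p.length - 1 ≤ k := by
    have := hp.length_le
    rw [length_playList, List.length_singleton] at this
    omega
  exact (List.prefix_of_prefix_length_le hp (playList_prefix_playList σ τ _ hle)
    hlen.ge).eq_of_length hlen.symm

theorem step_eq_of_protag {h : List g.V} (hprot : g.protag (h.getLastD g.v0)) :
    g.step σ τ h = h ++ [σ.act h] := by
  rw [step, if_pos hprot]

theorem play_succ (h : List g.V) (k : ℕ) :
    g.play σ τ h (k + 1) =
      if g.protag (g.play σ τ h k) then σ.act (g.playList σ τ h k)
      else τ.act (g.playList σ τ h k) :=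
  List.getLastD_concat

theorem edge_play_succ {h : List g.V} (hne : h ≠ []) (k : ℕ) :
    g.E (g.play σ τ h k) (g.play σ τ h (k + 1)) := by
  have hpne := playList_ne_nil σ τ hne k
  rw [play_succ, play, List.getLastD_eq_getLast hpne]
  split
  · exact σ.valid _ hpne
  · exact τ.valid _ hpne

theorem play_eq_of_leaf {h : List g.V} (hne : h ≠ []) {i j : ℕ} (hij : i ≤ j)
    (hleaf : g.leaf (g.play σ τ h i)) : g.play σ τ h j = g.play σ τ h i := by
  induction j, hij using Nat.le_induction with
  | base => rfl
  | succ j _ ih =>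
    rw [← ih] at hleaf ⊢
    exact (g.leaf_loop _ _ hleaf).mp (edge_play_succ σ τ hne j)

end Plays

section Payoffs

theorem payoffOf_shift {ρ : ℕ → g.V} (habs : ∀ i j, i ≤ j → g.leaf (ρ i) → ρ j = ρ i)
    (m : ℕ) : g.payoffOf (fun k => ρ (m + k)) = g.payoffOf ρ := by
  unfold payoffOf
  by_cases hx : ∃ k, g.leaf (ρ k)
  · have hy : ∃ k, g.leaf (ρ (m + k)) := by
      obtain ⟨n, hn⟩ := hx
      exact ⟨n, habs n (m + n) (Nat.le_add_left n m) hn ▸ hn⟩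
    rw [dif_pos hy, dif_pos hx]
    exact congrArg g.pay
      (habs _ _ (Nat.find_le (Nat.find_spec hy)) (Nat.find_spec hx))
  · have hy : ¬ ∃ k, g.leaf (ρ (m + k)) := fun ⟨k, hk⟩ => hx ⟨m + k, hk⟩
    rw [dif_neg hy, dif_neg hx]

variable (σ τ : g.Strat)

theorem pval_playList {h : List g.V} (hne : h ≠ []) (m : ℕ) :
    g.pval σ τ (g.playList σ τ h m) = g.pval σ τ h := by
  have hshift : g.play σ τ (g.playList σ τ h m) = fun k => g.play σ τ h (m + k) := by
    funext k
    rw [play, playList_add, play]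
  rw [pval, hshift, payoffOf_shift (fun i j hij => play_eq_of_leaf σ τ hne hij), pval]

theorem pval_eq_of_prefix_playList {p : List g.V} {k : ℕ}
    (hp : p <+: g.playList σ τ [g.v0] k) (hne : p ≠ []) :
    g.pval σ τ p = g.pval σ τ [g.v0] := by
  rw [eq_playList_of_prefix σ τ hp hne, pval_playList σ τ (List.cons_ne_nil _ _)]

theorem pval_congr {σ' τ' : g.Strat} {h h' : List g.V}
    (hplay : ∀ k, g.playList σ τ h k = g.playList σ' τ' h' k) :
    g.pval σ τ h = g.pval σ' τ' h' := by
  unfold pval play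
  simp only [hplay]

end Payoffs

section Compatibility

theorem Compat.of_prefix {σ : g.Strat} {h p : List g.V} (hc : g.Compat σ h) (hp : p <+: h)
    (hne : p ≠ []) : g.Compat σ p := by
  obtain ⟨-, hhead, hchain, hmoves⟩ := hc
  refine ⟨hne, ?_, List.IsChain.prefix hchain hp,
    fun q v hqv => hmoves q v (hqv.trans hp)⟩
  rw [← hhead, hp.head?_eq hne]

variable (σ τ : g.Strat)

theorem isChain_playList {h : List g.V} (hne : h ≠ []) (hch : h.IsChain g.E) (k : ℕ) :
    (g.playList σ τ h k).IsChain g.E := by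
  induction k with
  | zero => exact hch
  | succ k ih =>
    rw [playList_succ, step, List.isChain_append]
    refine ⟨ih, List.isChain_singleton _, fun x hx y hy => ?_⟩
    rw [List.getLast?_eq_some_getLast (playList_ne_nil σ τ hne k), Option.mem_some_iff] at hx
    rw [List.head?_singleton, Option.mem_some_iff] at hy
    subst hx hy
    rw [← List.getLastD_eq_getLast _ g.v0]
    have := edge_play_succ σ τ hne k
    rwa [play_succ] at this

theorem compat_playList (k : ℕ) : g.Compat σ (g.playList σ τ [g.v0] k) := by
  refine ⟨playList_ne_nil σ τ (List.cons_ne_nil _ _) k,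
    (playList_prefix_playList σ τ _ k.zero_le).head?_eq (List.cons_ne_nil _ _),
    isChain_playList σ τ (List.cons_ne_nil _ _) (List.isChain_singleton _) k, ?_⟩
  intro p v hpv hpne hprot
  have hpos := List.length_pos_iff.mpr hpne
  have hp := eq_playList_of_prefix σ τ ((List.prefix_append p [v]).trans hpv) hpne
  have hpv' := eq_playList_of_prefix σ τ hpv (List.concat_ne_nil _ _)
  rw [List.length_append, List.length_singleton, Nat.add_sub_cancel,
    show p.length = p.length - 1 + 1 by omega, playList_succ, ← hp,
    step_eq_of_protag σ τ hprot] at hpv'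
  exact (List.singleton_inj.mp (List.append_cancel_left hpv')).symm

end Compatibility

section Steering

noncomputable def followThen (p : List g.V) (hp : p.IsChain g.E) (τ : g.Strat) : g.Strat where
  act h := if h <+: p ∧ h ≠ p then p.getD h.length g.v0 else τ.act h
  valid h hne := by
    split_ifs with hh
    · obtain ⟨hpre, hne'⟩ := hh
      have hlt : h.length < p.length :=
        lt_of_le_of_ne hpre.length_le (fun he => hne' (hpre.eq_of_length he))
      have hpos := List.length_pos_iff.mpr hne
      rw [List.getD_eq_getElem _ _ hlt, List.getLast_eq_getElem,
        hpre.getElem (by omega)]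
      simpa only [Nat.sub_add_cancel hpos] using
        List.isChain_iff_getElem.mp hp (h.length - 1) (by omega)
    · exact τ.valid h hne

variable {σ : g.Strat} {p : List g.V} (hp : p.IsChain g.E) (τ : g.Strat)

theorem playList_followThen_of_compat (hcp : g.Compat σ p) {j : ℕ} (hj : j < p.length) :
    g.playList σ (followThen p hp τ) [g.v0] j = p.take (j + 1) := by
  induction j with
  | zero =>
    obtain ⟨hpne, hhead, -, -⟩ := hcp
    obtain ⟨a, l, rfl⟩ := List.exists_cons_of_ne_nil hpne
    simp_all [playList]
  | succ j ih =>
    have htake : (p.take (j + 1)).length = j + 1 := List.length_take_of_le (by omega)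
    have hne : p.take (j + 1) ≠ [] := List.ne_nil_of_length_pos (by omega)
    have hget : p.take (j + 1) ++ [p[j + 1]] = p.take (j + 2) := by
      simp
    rw [playList_succ, ih (by omega), step, ← hget]
    congr 2
    split_ifs with hprot
    · exact hcp.2.2.2 _ _ (hget ▸ List.take_prefix _ _) hne hprot
    · have hproper : p.take (j + 1) <+: p ∧ p.take (j + 1) ≠ p :=
        ⟨List.take_prefix _ _, fun he => by rw [← he, htake] at hj; omega⟩
      show (if _ then _ else _) = _
      rw [if_pos hproper, htake, List.getD_eq_getElem _ _ hj]

theorem playList_followThen_from (k : ℕ) :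
    g.playList σ (followThen p hp τ) p k = g.playList σ τ p k := by
  induction k with
  | zero => rfl
  | succ k ih =>
    have hpre := playList_prefix_playList σ τ p k.zero_le
    have hnot : ¬ (g.playList σ τ p k <+: p ∧ g.playList σ τ p k ≠ p) :=
      fun ⟨h1, h2⟩ => h2 (h1.eq_of_length (le_antisymm h1.length_le hpre.length_le))
    rw [playList_succ, playList_succ, ih, step, step]
    show _ ++ [if _ then _ else (if _ then _ else _)] = _
    rw [if_neg hnot]

theorem pval_followThen (hcp : g.Compat σ p) :
    g.pval σ (followThen p hp τ) [g.v0] = g.pval σ τ p := by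
  have hlen := List.length_pos_iff.mpr hcp.1
  have hreach : g.playList σ (followThen p hp τ) [g.v0] (p.length - 1) = p := by
    rw [playList_followThen_of_compat hp τ hcp (by omega), Nat.sub_add_cancel hlen,
      List.take_length]
  calc g.pval σ (followThen p hp τ) [g.v0]
      = g.pval σ (followThen p hp τ) p := by
        rw [← pval_playList _ _ (List.cons_ne_nil _ _) (p.length - 1), hreach]
    _ = g.pval σ τ p := pval_congr _ _ (playList_followThen_from hp τ)

theorem aVal_le_aVal_of_compat (hcp : g.Compat σ p) : g.aVal σ [g.v0] ≤ g.aVal σ p := by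
  obtain ⟨τ, hτ⟩ := exists_pval_eq_aVal σ p
  have hp : p.IsChain g.E := hcp.2.2.1
  calc g.aVal σ [g.v0] ≤ g.pval σ (followThen p hp τ) [g.v0] := aVal_le_pval _ _ _
    _ = g.aVal σ p := by rw [pval_followThen hp τ hcp, hτ]

theorem cVal_le_cVal_of_compat (hcp : g.Compat σ p) : g.cVal σ p ≤ g.cVal σ [g.v0] := by
  obtain ⟨τ, hτ⟩ := exists_pval_eq_cVal σ p
  have hp : p.IsChain g.E := hcp.2.2.1
  calc g.cVal σ p = g.pval σ (followThen p hp τ) [g.v0] := by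
        rw [pval_followThen hp τ hcp, hτ]
    _ ≤ g.cVal σ [g.v0] := pval_le_cVal _ _ _

end Steering

section Divergence

theorem playList_eq_or_exists_act_ne (σ τ τ' : g.Strat) (h : List g.V) :
    (∀ k, g.playList σ τ' h k = g.playList τ τ' h k) ∨
      ∃ m, g.playList σ τ' h m = g.playList τ τ' h m ∧
        g.protag ((g.playList τ τ' h m).getLastD g.v0) ∧
        σ.act (g.playList τ τ' h m) ≠ τ.act (g.playList τ τ' h m) := by
  refine or_iff_not_imp_right.mpr fun hsplit k => ?_
  induction k with
  | zero => rfl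
  | succ k ih =>
    rw [playList_succ, playList_succ, ih, step, step]
    by_cases hprot : g.protag ((g.playList τ τ' h k).getLastD g.v0)
    · rw [if_pos hprot, if_pos hprot, not_ne_iff.mp fun hact => hsplit ⟨k, ih, hprot, hact⟩]
    · rw [if_neg hprot, if_neg hprot]

theorem not_compat_both_of_act_ne {σ τ : g.Strat} {h : List g.V} (hne : h ≠ [])
    (hprot : g.protag (h.getLastD g.v0)) (hact : σ.act h ≠ τ.act h) :
    ∀ h', h <+: h' → h ≠ h' → ¬ (g.Compat σ h' ∧ g.Compat τ h') := by
  rintro h' ⟨_ | ⟨v, t⟩, rfl⟩ hext ⟨hσ, hτ⟩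
  · exact hext (List.append_nil h).symm
  · have hv : h ++ [v] <+: h ++ v :: t := ⟨t, by simp⟩
    exact hact ((hσ.2.2.2 h v hv hne hprot).trans (hτ.2.2.2 h v hv hne hprot).symm)

def AgreesOnMaximalHistories (σ τ : g.Strat) : Prop :=
  ∀ h : List g.V, g.Compat σ h → g.Compat τ h →
    (∀ h' : List g.V, h <+: h' → h ≠ h' → ¬ (g.Compat σ h' ∧ g.Compat τ h')) →
    ∃ p : List g.V, p <+: h ∧ p ≠ [] ∧ g.aVal σ p = g.aVal τ p ∧ g.cVal σ p = g.cVal τ p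

namespace AgreesOnMaximalHistories

variable {σ τ : g.Strat}

theorem symm (H : g.AgreesOnMaximalHistories σ τ) : g.AgreesOnMaximalHistories τ σ := by
  intro h hτ hσ hmax
  obtain ⟨p, hph, hpne, ha, hc⟩ := H h hσ hτ fun h' hpre hext hc => hmax h' hpre hext hc.symm
  exact ⟨p, hph, hpne, ha.symm, hc.symm⟩

theorem pval_eq_or_exists_prefix (H : g.AgreesOnMaximalHistories σ τ) (τ' : g.Strat) :
    g.pval σ τ' [g.v0] = g.pval τ τ' [g.v0] ∨
      ∃ p, g.Compat σ p ∧ g.Compat τ p ∧ g.aVal σ p = g.aVal τ p ∧ g.cVal σ p = g.cVal τ p ∧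
        g.pval σ τ' p = g.pval σ τ' [g.v0] ∧ g.pval τ τ' p = g.pval τ τ' [g.v0] := by
  rcases playList_eq_or_exists_act_ne σ τ τ' [g.v0] with hplay | ⟨m, heq, hprot, hact⟩
  · exact Or.inl (pval_congr _ _ hplay)
  · right
    have hτh := compat_playList τ τ' m
    have hσh : g.Compat σ (g.playList τ τ' [g.v0] m) := heq ▸ compat_playList σ τ' m
    obtain ⟨p, hph, hpne, ha, hc⟩ :=
      H _ hσh hτh (not_compat_both_of_act_ne hτh.1 hprot hact)
    exact ⟨p, hσh.of_prefix hph hpne, hτh.of_prefix hph hpne, ha, hc,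
      pval_eq_of_prefix_playList σ τ' (heq ▸ hph) hpne,
      pval_eq_of_prefix_playList τ τ' hph hpne⟩

theorem aVal_le (H : g.AgreesOnMaximalHistories σ τ) : g.aVal σ [g.v0] ≤ g.aVal τ [g.v0] := by
  refine le_aVal fun τ' => ?_
  rcases H.pval_eq_or_exists_prefix τ' with hpval | ⟨p, hσp, -, ha, -, -, hτp⟩
  · exact hpval ▸ aVal_le_pval σ τ' _
  · calc g.aVal σ [g.v0] ≤ g.aVal σ p := aVal_le_aVal_of_compat hσp
      _ = g.aVal τ p := ha
      _ ≤ g.pval τ τ' p := aVal_le_pval τ τ' p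
      _ = g.pval τ τ' [g.v0] := hτp

theorem cVal_le (H : g.AgreesOnMaximalHistories σ τ) : g.cVal σ [g.v0] ≤ g.cVal τ [g.v0] := by
  obtain ⟨τ', hτ'⟩ := exists_pval_eq_cVal σ [g.v0]
  rw [← hτ']
  rcases H.pval_eq_or_exists_prefix τ' with hpval | ⟨p, -, hτp, -, hc, hσp, -⟩
  · exact hpval ▸ pval_le_cVal τ τ' _
  · calc g.pval σ τ' [g.v0] = g.pval σ τ' p := hσp.symm
      _ ≤ g.cVal σ p := pval_le_cVal σ τ' p
      _ = g.cVal τ p := hc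
      _ ≤ g.cVal τ [g.v0] := cVal_le_cVal_of_compat hτp

end AgreesOnMaximalHistories

end Divergence

end GSRGame

/-- if for every maximal history `h` compatible with both `σ` and `τ` there is
a prefix `h'` of `h` with `aVal(h', σ) = aVal(h', τ)` and `cVal(h', σ) = cVal(h', τ)`, then
`aVal(v₀, σ) = aVal(v₀, τ)` and `cVal(v₀, σ) = cVal(v₀, τ)`. -/
theorem stmt16 (g : GSRGame) (σ τ : g.Strat)
    (hyp : ∀ h : List g.V, g.Compat σ h → g.Compat τ h →
      (∀ h' : List g.V, h <+: h' → h ≠ h' → ¬ (g.Compat σ h' ∧ g.Compat τ h')) →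
      ∃ p : List g.V, p <+: h ∧ p ≠ [] ∧
        g.aVal σ p = g.aVal τ p ∧ g.cVal σ p = g.cVal τ p) :
    g.aVal σ [g.v0] = g.aVal τ [g.v0] ∧ g.cVal σ [g.v0] = g.cVal τ [g.v0] := by
  have H : g.AgreesOnMaximalHistories σ τ := hyp
  exact ⟨le_antisymm H.aVal_le H.symm.aVal_le, le_antisymm H.cVal_le H.symm.cVal_le⟩
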